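/- Define n(c') := c'² (1 − erf(c'/√2)) + F(c') for c' > 0, where F(z) := erf(z/√2) − √(2/π) · z · e^{−z²/2}. Then: (i) n is increasing on (0, ∞) with 0 < n(c') < 1 for all c' > 0; (ii) the map c' ↦ n(c')/c'² is decreasing on (0, ∞), satisfies 0 < n(c')/c'² < 1 for all c' > 0, and tends to 1 as c' → 0⁺; (iii) n(c')/c'² > 1/2 whenever 0 < c' ≤ 1; and (iv) n(c') > 1/2 whenever c' ≥ 1. -/

import Mathlib

open Real Filter

/-- The error function `erf z = (2/√π) ∫₀^z e^{−t²} dt`. -/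
noncomputable def erf (z : ℝ) : ℝ := 2 / Real.sqrt π * ∫ t in (0:ℝ)..z, Real.exp (-t ^ 2)

/-- `F(z) = erf(z/√2) − √(2/π) · z · e^{−z²/2}`. -/
noncomputable def F (z : ℝ) : ℝ :=
  erf (z / Real.sqrt 2) - Real.sqrt (2 / π) * z * Real.exp (-z ^ 2 / 2)

/-- `n(c') = c'²(1 − erf(c'/√2)) + F(c')`, the variance reduction factor `ν_c(R)`
at `c' = c/√(2R+ζ²)`. -/
noncomputable def n (c' : ℝ) : ℝ := c' ^ 2 * (1 - erf (c' / Real.sqrt 2)) + F c'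

lemma cont_gauss : Continuous (fun t : ℝ => Real.exp (-t ^ 2)) := by continuity

lemma hasDerivAt_erf (z : ℝ) :
    HasDerivAt erf (2 / Real.sqrt π * Real.exp (-z ^ 2)) z := by
  have h := (cont_gauss.integral_hasStrictDerivAt 0 z).hasDerivAt
  exact h.const_mul (2 / Real.sqrt π)

lemma sqrt2_pos : (0:ℝ) < Real.sqrt 2 := by positivity

lemma sqrtpi_pos : (0:ℝ) < Real.sqrt π := Real.sqrt_pos.mpr Real.pi_pos

lemma sqrt_two_div_pi : Real.sqrt (2 / π) = Real.sqrt 2 / Real.sqrt π :=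
  Real.sqrt_div (by norm_num) π

lemma hasDerivAt_erf_comp (c : ℝ) :
    HasDerivAt (fun x => erf (x / Real.sqrt 2))
      (Real.sqrt (2 / π) * Real.exp (-c ^ 2 / 2)) c := by
  have h := (hasDerivAt_erf (c / Real.sqrt 2)).comp c
      ((hasDerivAt_id c).div_const (Real.sqrt 2))
  have e2 : (Real.sqrt 2) ^ 2 = 2 := Real.sq_sqrt (by norm_num)
  have harg : -(c / Real.sqrt 2) ^ 2 = -c ^ 2 / 2 := by
    rw [div_pow, e2]; ring
  refine h.congr_deriv ?_; symm
  rw [harg, sqrt_two_div_pi]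
  have e2' : Real.sqrt 2 * Real.sqrt 2 = 2 := Real.mul_self_sqrt (by norm_num)
  field_simp
  linear_combination e2

lemma hasDerivAt_gauss (c : ℝ) :
    HasDerivAt (fun z : ℝ => Real.exp (-z ^ 2 / 2)) (-c * Real.exp (-c ^ 2 / 2)) c := by
  have h1 : HasDerivAt (fun z : ℝ => -z ^ 2 / 2) (-c) c := by
    have := ((hasDerivAt_pow 2 c).neg).div_const 2
    refine this.congr_deriv ?_; symm
    push_cast; ring
  have := h1.exp
  refine this.congr_deriv ?_; symm
  ring

lemma hasDerivAt_F (c : ℝ) :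
    HasDerivAt F (Real.sqrt (2 / π) * c ^ 2 * Real.exp (-c ^ 2 / 2)) c := by
  have h1 := hasDerivAt_erf_comp c
  have h2 := ((hasDerivAt_id c).const_mul (Real.sqrt (2 / π))).mul (hasDerivAt_gauss c)
  have h3 := h1.sub h2
  simp only [id_eq] at h3
  refine h3.congr_deriv ?_; symm
  ring

lemma hasDerivAt_n (c : ℝ) :
    HasDerivAt n (2 * c * (1 - erf (c / Real.sqrt 2))) c := by
  have h1 := ((hasDerivAt_pow 2 c).mul
    ((hasDerivAt_const c (1:ℝ)).sub (hasDerivAt_erf_comp c))).add (hasDerivAt_F c)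
  refine h1.congr_deriv ?_; symm
  push_cast; simp only [Pi.sub_apply]; ring

lemma erf_zero : erf 0 = 0 := by simp [erf]

lemma continuous_erf : Continuous erf :=
  continuous_iff_continuousAt.mpr fun z => (hasDerivAt_erf z).continuousAt

lemma integrable_gauss : MeasureTheory.Integrable (fun t : ℝ => Real.exp (-t ^ 2)) := by
  have := integrable_exp_neg_mul_sq (by norm_num : (0:ℝ) < 1)
  simpa using this

noncomputable def tailI (a : ℝ) : ℝ := ∫ t in Set.Ioi a, Real.exp (-t ^ 2)

lemma tailI_pos (a : ℝ) : 0 < tailI a := by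
  rw [tailI]
  rw [MeasureTheory.setIntegral_pos_iff_support_of_nonneg_ae
    (Filter.Eventually.of_forall fun t => (Real.exp_pos _).le) integrable_gauss.integrableOn]
  have : Function.support (fun t : ℝ => Real.exp (-t ^ 2)) = Set.univ := by
    ext t; simp [Function.support, (Real.exp_pos (-t ^ 2)).ne']
  rw [this, Set.univ_inter, Real.volume_Ioi]
  simp

lemma tailI_zero : tailI 0 = Real.sqrt π / 2 := by
  have := integral_gaussian_Ioi 1
  simpa [tailI] using this

lemma erf_eq_tail {z : ℝ} (hz : 0 < z) :
    erf z = 1 - 2 / Real.sqrt π * tailI z := by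
  have hsplit : tailI 0 = (∫ t in Set.Ioc 0 z, Real.exp (-t ^ 2)) + tailI z := by
    rw [tailI, tailI, ← MeasureTheory.setIntegral_union
      (Set.Ioc_disjoint_Ioi le_rfl) measurableSet_Ioi
      integrable_gauss.integrableOn integrable_gauss.integrableOn,
      Set.Ioc_union_Ioi_eq_Ioi hz.le]
  have hiv : (∫ t in (0:ℝ)..z, Real.exp (-t ^ 2)) = ∫ t in Set.Ioc 0 z, Real.exp (-t ^ 2) :=
    intervalIntegral.integral_of_le hz.le
  rw [erf, hiv]
  have h0 : (∫ t in Set.Ioc 0 z, Real.exp (-t ^ 2)) = Real.sqrt π / 2 - tailI z := by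
    rw [← tailI_zero]; linarith [hsplit]
  rw [h0]
  field_simp

lemma erf_lt_one {z : ℝ} (hz : 0 < z) : erf z < 1 := by
  rw [erf_eq_tail hz]
  have := tailI_pos z
  have h2 : 0 < 2 / Real.sqrt π := by positivity
  nlinarith

lemma one_sub_erf_pos {z : ℝ} (hz : 0 < z) : 0 < 1 - erf z := by
  linarith [erf_lt_one hz]

lemma tail_mul (a : ℝ) :
    ∫ t in Set.Ioi a, t * Real.exp (-t ^ 2) = Real.exp (-a ^ 2) / 2 := by
  have hderiv : ∀ x ∈ Set.Ici a,
      HasDerivAt (fun t : ℝ => -Real.exp (-t ^ 2) / 2) (x * Real.exp (-x ^ 2)) x := by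
    intro x _
    have h1 : HasDerivAt (fun t : ℝ => -t ^ 2) (-(2 * x)) x := by
      have := (hasDerivAt_pow 2 x).neg
      refine this.congr_deriv ?_; symm; push_cast; ring
    have := (h1.exp.neg).div_const 2
    refine this.congr_deriv ?_; symm; ring
  have hint : MeasureTheory.IntegrableOn (fun x : ℝ => x * Real.exp (-x ^ 2)) (Set.Ioi a) := by
    have := integrable_mul_exp_neg_mul_sq (by norm_num : (0:ℝ) < 1)
    simpa using this.integrableOn
  have hlim : Tendsto (fun t : ℝ => -Real.exp (-t ^ 2) / 2) atTop (nhds 0) := by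
    have h1 : Tendsto (fun t : ℝ => -t ^ 2) atTop atBot := by
      exact tendsto_neg_atTop_atBot.comp (tendsto_pow_atTop two_ne_zero)
    have h2 : Tendsto (fun t : ℝ => Real.exp (-t ^ 2)) atTop (nhds 0) :=
      Real.tendsto_exp_atBot.comp h1
    have := (h2.neg).div_const 2
    simpa using this
  have := MeasureTheory.integral_Ioi_of_hasDerivAt_of_tendsto' hderiv hint hlim
  rw [this]; ring

lemma tailI_le {a : ℝ} (ha : 0 < a) : tailI a ≤ Real.exp (-a ^ 2) / (2 * a) := by
  have hint1 : MeasureTheory.IntegrableOn (fun t : ℝ => Real.exp (-t ^ 2)) (Set.Ioi a) :=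
    integrable_gauss.integrableOn
  have hint2 : MeasureTheory.IntegrableOn (fun t : ℝ => t / a * Real.exp (-t ^ 2)) (Set.Ioi a) := by
    have := integrable_mul_exp_neg_mul_sq (by norm_num : (0:ℝ) < 1)
    have h2 := (this.integrableOn (s := Set.Ioi a)).div_const a
    simpa [div_mul_eq_mul_div, MeasureTheory.IntegrableOn] using h2
  have h1 : tailI a ≤ ∫ t in Set.Ioi a, t / a * Real.exp (-t ^ 2) := by
    rw [tailI]
    refine MeasureTheory.setIntegral_mono_on hint1 hint2 measurableSet_Ioi fun t ht => ?_
    have h1t : (1:ℝ) ≤ t / a := (le_div_iff₀ ha).mpr (by simpa using (le_of_lt ht))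
    nlinarith [Real.exp_pos (-t ^ 2)]
  have h2 : (∫ t in Set.Ioi a, t / a * Real.exp (-t ^ 2)) = Real.exp (-a ^ 2) / 2 / a := by
    simp_rw [div_mul_eq_mul_div]
    rw [MeasureTheory.integral_div, tail_mul]
  rw [h2] at h1
  calc tailI a ≤ Real.exp (-a ^ 2) / 2 / a := h1
    _ = Real.exp (-a ^ 2) / (2 * a) := by ring

lemma strictMonoOn_n : StrictMonoOn n (Set.Ici 0) := by
  refine strictMonoOn_of_deriv_pos (convex_Ici 0)
    (fun x _ => ((hasDerivAt_n x).differentiableAt.continuousAt).continuousWithinAt) ?_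
  intro x hx
  rw [interior_Ici] at hx
  rw [(hasDerivAt_n x).deriv]
  have hx0 : (0:ℝ) < x := hx
  have := one_sub_erf_pos (z := x / Real.sqrt 2) (by positivity)
  positivity

lemma n_zero : n 0 = 0 := by
  simp [n, F, erf_zero]

lemma n_pos {c : ℝ} (hc : 0 < c) : 0 < n c := by
  have := strictMonoOn_n (Set.self_mem_Ici) (le_of_lt hc : (0:ℝ) ≤ c) hc
  rwa [n_zero] at this

lemma strictMonoOn_F : StrictMonoOn F (Set.Ici 0) := by
  refine strictMonoOn_of_deriv_pos (convex_Ici 0)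
    (fun x _ => ((hasDerivAt_F x).differentiableAt.continuousAt).continuousWithinAt) ?_
  intro x hx
  rw [interior_Ici] at hx
  rw [(hasDerivAt_F x).deriv]
  have hx0 : (0:ℝ) < x := hx
  have h2π : (0:ℝ) < 2 / π := by have := Real.pi_pos; positivity
  positivity

lemma F_zero : F 0 = 0 := by simp [F, erf_zero]

lemma F_pos {c : ℝ} (hc : 0 < c) : 0 < F c := by
  have := strictMonoOn_F (Set.self_mem_Ici) (le_of_lt hc : (0:ℝ) ≤ c) hc
  rwa [F_zero] at this

lemma sq_half {c : ℝ} : (c / Real.sqrt 2) ^ 2 = c ^ 2 / 2 := by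
  rw [div_pow, Real.sq_sqrt (by norm_num : (0:ℝ) ≤ 2)]

lemma one_sub_erf_le {c : ℝ} (hc : 0 < c) :
    1 - erf (c / Real.sqrt 2) ≤ Real.sqrt (2 / π) * Real.exp (-c ^ 2 / 2) / c := by
  set a := c / Real.sqrt 2 with ha_def
  have ha : 0 < a := by positivity
  have hT := tailI_le ha
  have hE : Real.exp (-a ^ 2) = Real.exp (-c ^ 2 / 2) := by
    rw [show -a ^ 2 = -c ^ 2 / 2 by rw [ha_def, sq_half]; ring]
  rw [erf_eq_tail ha]
  have h1 : 2 / Real.sqrt π * tailI a ≤ 2 / Real.sqrt π * (Real.exp (-a ^ 2) / (2 * a)) :=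
    mul_le_mul_of_nonneg_left hT (by positivity)
  have h2 : 2 / Real.sqrt π * (Real.exp (-a ^ 2) / (2 * a))
      = Real.sqrt (2 / π) * Real.exp (-c ^ 2 / 2) / c := by
    rw [hE, sqrt_two_div_pi, ha_def]
    have e2' : Real.sqrt 2 * Real.sqrt 2 = 2 := Real.mul_self_sqrt (by norm_num)
    field_simp
  linarith [h1.trans_eq h2]

lemma n_lt_one {c : ℝ} (hc : 0 < c) : n c < 1 := by
  have hkey : 1 - n c = (1 - c ^ 2) * (1 - erf (c / Real.sqrt 2))
      + Real.sqrt (2 / π) * c * Real.exp (-c ^ 2 / 2) := by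
    simp only [n, F]; ring
  have hE := Real.exp_pos (-c ^ 2 / 2)
  have hK : 0 < Real.sqrt (2 / π) := by
    have := Real.pi_pos; positivity
  have hT := one_sub_erf_pos (z := c / Real.sqrt 2) (by positivity)
  rcases le_or_gt c 1 with h1 | h1
  · nlinarith [mul_nonneg (by nlinarith : (0:ℝ) ≤ 1 - c ^ 2) hT.le,
      mul_pos (mul_pos hK hc) hE]
  · have hle := one_sub_erf_le hc
    have h2 : (c ^ 2 - 1) * (1 - erf (c / Real.sqrt 2))
        ≤ (c ^ 2 - 1) * (Real.sqrt (2 / π) * Real.exp (-c ^ 2 / 2) / c) :=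
      mul_le_mul_of_nonneg_left hle (by nlinarith)
    have h3 : (c ^ 2 - 1) * (Real.sqrt (2 / π) * Real.exp (-c ^ 2 / 2) / c)
        < c * (Real.sqrt (2 / π) * Real.exp (-c ^ 2 / 2)) := by
      rw [mul_div_assoc', div_lt_iff₀ hc]
      nlinarith
    nlinarith

lemma hasDerivAt_m {x : ℝ} (hx : 0 < x) :
    HasDerivAt (fun c : ℝ => n c / c ^ 2)
      ((2 * x * (1 - erf (x / Real.sqrt 2)) * x ^ 2 - n x * (2 * x ^ 1)) / (x ^ 2) ^ 2) x := by
  have := (hasDerivAt_n x).div (hasDerivAt_pow 2 x) (pow_ne_zero 2 hx.ne')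
  refine this.congr_deriv ?_; rfl

lemma strictAntiOn_m : StrictAntiOn (fun c : ℝ => n c / c ^ 2) (Set.Ioi 0) := by
  refine strictAntiOn_of_deriv_neg (convex_Ioi 0)
    (fun x hx => ((hasDerivAt_m hx).differentiableAt.continuousAt).continuousWithinAt) ?_
  intro x hx
  rw [interior_Ioi] at hx
  have hx0 : (0:ℝ) < x := hx
  rw [(hasDerivAt_m hx0).deriv]
  apply div_neg_of_neg_of_pos
  · have hF := F_pos hx0
    have hn : n x = x ^ 2 * (1 - erf (x / Real.sqrt 2)) + F x := rfl
    nlinarith [mul_pos hx0 hF]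
  · positivity

lemma F_le {c : ℝ} (hc : 0 < c) : F c ≤ c * (Real.sqrt (2 / π) * c ^ 2) := by
  have hcont : Continuous (fun t : ℝ => Real.sqrt (2 / π) * t ^ 2 * Real.exp (-t ^ 2 / 2)) := by
    continuity
  have hFc : F c = ∫ t in (0:ℝ)..c, Real.sqrt (2 / π) * t ^ 2 * Real.exp (-t ^ 2 / 2) := by
    rw [intervalIntegral.integral_eq_sub_of_hasDerivAt (fun t _ => hasDerivAt_F t)
      (hcont.intervalIntegrable 0 c), F_zero, sub_zero]
  have hmono : (∫ t in (0:ℝ)..c, Real.sqrt (2 / π) * t ^ 2 * Real.exp (-t ^ 2 / 2))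
      ≤ ∫ _t in (0:ℝ)..c, Real.sqrt (2 / π) * c ^ 2 := by
    apply intervalIntegral.integral_mono_on hc.le (hcont.intervalIntegrable 0 c)
      (intervalIntegrable_const)
    intro t ht
    have h1 : t ^ 2 ≤ c ^ 2 := pow_le_pow_left₀ ht.1 ht.2 2
    have h2 : Real.exp (-t ^ 2 / 2) ≤ 1 := Real.exp_le_one_iff.mpr (by nlinarith [sq_nonneg t])
    have hK : (0:ℝ) ≤ Real.sqrt (2 / π) := Real.sqrt_nonneg _
    nlinarith [Real.exp_pos (-t ^ 2 / 2), mul_nonneg hK (sq_nonneg t)]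
  rw [hFc]
  calc _ ≤ ∫ _t in (0:ℝ)..c, Real.sqrt (2 / π) * c ^ 2 := hmono
    _ = c * (Real.sqrt (2 / π) * c ^ 2) := by
        rw [intervalIntegral.integral_const]; simp

lemma tendsto_m : Tendsto (fun c : ℝ => n c / c ^ 2) (nhdsWithin 0 (Set.Ioi 0)) (nhds 1) := by
  have heq : ∀ c ∈ Set.Ioi (0:ℝ), n c / c ^ 2
      = (1 - erf (c / Real.sqrt 2)) + F c / c ^ 2 := by
    intro c hc
    rw [n, add_div, mul_div_cancel_left₀ _ (pow_ne_zero 2 (ne_of_gt (Set.mem_Ioi.mp hc)))]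
  have h1 : Tendsto (fun c : ℝ => 1 - erf (c / Real.sqrt 2)) (nhdsWithin 0 (Set.Ioi 0))
      (nhds 1) := by
    have hcont : Continuous (fun c : ℝ => 1 - erf (c / Real.sqrt 2)) :=
      continuous_const.sub (continuous_erf.comp (continuous_id.div_const _))
    have h := (hcont.tendsto 0).mono_left (nhdsWithin_le_nhds (s := Set.Ioi (0:ℝ)))
    simpa [erf_zero] using h
  have h2 : Tendsto (fun c : ℝ => F c / c ^ 2) (nhdsWithin 0 (Set.Ioi 0)) (nhds 0) := by
    apply squeeze_zero'
    · filter_upwards [self_mem_nhdsWithin] with c hc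
      exact div_nonneg (F_pos hc).le (sq_nonneg c)
    · filter_upwards [self_mem_nhdsWithin] with c hc
      have hc' : (0:ℝ) < c := hc
      rw [div_le_iff₀ (by positivity : (0:ℝ) < c ^ 2)]
      calc F c ≤ c * (Real.sqrt (2 / π) * c ^ 2) := F_le hc
        _ = Real.sqrt (2 / π) * c * c ^ 2 := by ring
    · have : Tendsto (fun c : ℝ => Real.sqrt (2 / π) * c) (nhds 0) (nhds 0) := by
        simpa [Pi.mul_def] using (continuous_const.mul continuous_id).tendsto (0:ℝ)
      exact this.mono_left nhdsWithin_le_nhds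
  have := (h1.add h2)
  rw [add_zero] at this
  exact this.congr' (by filter_upwards [self_mem_nhdsWithin] with c hc; exact (heq c hc).symm)

lemma m_lt_one {c : ℝ} (hc : 0 < c) : n c / c ^ 2 < 1 := by
  have hhalf : (0:ℝ) < c / 2 := by linarith
  have h1 : n c / c ^ 2 < n (c / 2) / (c / 2) ^ 2 :=
    strictAntiOn_m hhalf hc (by linarith)
  have h2 : n (c / 2) / (c / 2) ^ 2 ≤ 1 := by
    refine ge_of_tendsto tendsto_m ?_
    filter_upwards [Ioo_mem_nhdsGT_of_mem (Set.mem_Ico.mpr ⟨le_rfl, hhalf⟩)] with t ht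
    exact (strictAntiOn_m ht.1 hhalf ht.2).le
  linarith

lemma n_one : n 1 = 1 - Real.sqrt (2 / π) * Real.exp (-(1:ℝ) / 2) := by
  simp only [n, F, one_pow, mul_one, one_mul]
  ring

lemma key_num : Real.sqrt (2 / π) * Real.exp (-(1:ℝ) / 2) < 1 / 2 := by
  have hπ := Real.pi_pos
  have h8 : (8:ℝ) < π * Real.exp 1 := by
    nlinarith [Real.pi_gt_d6, Real.exp_one_gt_d9]
  have hsq : (Real.sqrt (2 / π) * Real.exp (-(1:ℝ) / 2)) ^ 2 = 2 / (π * Real.exp 1) := by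
    rw [mul_pow, Real.sq_sqrt (by positivity : (0:ℝ) ≤ 2 / π), sq, ← Real.exp_add]
    norm_num
    rw [Real.exp_neg]
    field_simp
  have h4 : 2 / (π * Real.exp 1) < (1 / 2 : ℝ) ^ 2 := by
    rw [div_lt_iff₀ (by positivity)]
    nlinarith
  refine lt_of_pow_lt_pow_left₀ 2 (by norm_num) ?_
  rw [hsq]; exact h4

lemma n_one_gt : 1 / 2 < n 1 := by
  rw [n_one]; linarith [key_num]

/-- Properties of the variance reduction factor `n` and of `n(c')/c'²`. -/
theorem variance_reduction_factor_properties :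
    (StrictMonoOn n (Set.Ioi (0:ℝ)) ∧ ∀ c' : ℝ, 0 < c' → 0 < n c' ∧ n c' < 1) ∧
    (StrictAntiOn (fun c' : ℝ => n c' / c' ^ 2) (Set.Ioi (0:ℝ)) ∧
      (∀ c' : ℝ, 0 < c' → 0 < n c' / c' ^ 2 ∧ n c' / c' ^ 2 < 1) ∧
      Tendsto (fun c' : ℝ => n c' / c' ^ 2) (nhdsWithin 0 (Set.Ioi 0)) (nhds 1)) ∧
    (∀ c' : ℝ, 0 < c' → c' ≤ 1 → 1 / 2 < n c' / c' ^ 2) ∧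
    (∀ c' : ℝ, 1 ≤ c' → 1 / 2 < n c') := by
  refine ⟨⟨strictMonoOn_n.mono Set.Ioi_subset_Ici_self,
    fun c hc => ⟨n_pos hc, n_lt_one hc⟩⟩,
    ⟨strictAntiOn_m, fun c hc => ⟨div_pos (n_pos hc) (by positivity), m_lt_one hc⟩, tendsto_m⟩,
    ?_, ?_⟩
  · intro c hc hc1
    rcases eq_or_lt_of_le hc1 with rfl | hlt
    · simpa using n_one_gt
    · have := strictAntiOn_m hc (Set.mem_Ioi.mpr one_pos) hlt
      simp only [one_pow, div_one] at this
      linarith [n_one_gt]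
  · intro c hc
    rcases eq_or_lt_of_le hc with rfl | hlt
    · exact n_one_gt
    · have := strictMonoOn_n (Set.mem_Ici.mpr zero_le_one)
        (Set.mem_Ici.mpr (by linarith : (0:ℝ) ≤ c)) hlt
      linarith [n_one_gt]
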